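/- arXiv:2105.14545 — 2 statements merged into one kernel-verified Lean document; each statement's English description precedes it below -/
import Mathlib

section
/- Let U and Γ be n×n Hermitian positive semidefinite complex matrices. Then log det(I + U) − Re(tr U) + Re(tr((I + U)·Γ·(I + Γ)⁻¹)) ≤ log det(I + Γ), with equality if and only if U = Γ. (Here det(I + U) and det(I + Γ) are positive reals, so the logarithms are well defined.) -/
/-!
Put `A = 1 + U` and `B = 1 + Γ`. Since `Γ * B⁻¹ = 1 - B⁻¹`, the left-hand side equals
`log det A + n - tr (A * B⁻¹)`. The congruent matrix `C = B^{-1/2} * A * B^{-1/2}` is positive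
definite with `det C = det A / det B` and `tr C = tr (A * B⁻¹)`, so the gap between the two
sides is `∑ᵢ (λᵢ - 1 - log λᵢ)` over the eigenvalues `λᵢ > 0` of `C`. Each term is nonnegative
since `log x ≤ x - 1`, with equality only at `x = 1`; so equality forces `C = 1`, i.e. `A = B`.
-/

open Matrix ComplexOrder

namespace Matrix

variable {𝕜 ι : Type*} [RCLike 𝕜] [Fintype ι] [DecidableEq ι]

theorem IsHermitian.eq_one_of_eigenvalues_eq_one {C : Matrix ι ι 𝕜} (hC : C.IsHermitian)
    (h : ∀ i, hC.eigenvalues i = 1) : C = 1 := by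
  have hspec : Set.EqOn id (fun _ ↦ 1) (spectrum ℝ C) := by
    rw [hC.spectrum_real_eq_range_eigenvalues]
    rintro _ ⟨i, rfl⟩
    exact h i
  rw [← cfc_id ℝ C hC.isSelfAdjoint, cfc_congr hspec, cfc_const_one ℝ C hC.isSelfAdjoint]

theorem PosDef.re_trace_sub_card_sub_log_re_det {C : Matrix ι ι 𝕜} (hC : C.PosDef) :
    RCLike.re C.trace - Fintype.card ι - Real.log (RCLike.re C.det) =
      ∑ i, (hC.1.eigenvalues i - 1 - Real.log (hC.1.eigenvalues i)) := by
  rw [hC.1.trace_eq_sum_eigenvalues, hC.1.det_eq_prod_eigenvalues, ← RCLike.ofReal_sum,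
    ← RCLike.ofReal_prod, RCLike.ofReal_re, RCLike.ofReal_re,
    Real.log_prod fun i _ ↦ (hC.eigenvalues_pos i).ne', Finset.sum_sub_distrib,
    Finset.sum_sub_distrib, Finset.sum_const, Finset.card_univ, nsmul_one]

theorem PosDef.log_re_det_le_re_trace_sub_card {C : Matrix ι ι 𝕜} (hC : C.PosDef) :
    Real.log (RCLike.re C.det) ≤ RCLike.re C.trace - Fintype.card ι := by
  have := hC.re_trace_sub_card_sub_log_re_det
  have : 0 ≤ ∑ i, (hC.1.eigenvalues i - 1 - Real.log (hC.1.eigenvalues i)) :=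
    Finset.sum_nonneg fun i _ ↦ by linarith [Real.log_le_sub_one_of_pos (hC.eigenvalues_pos i)]
  linarith

theorem PosDef.eq_one_of_log_re_det_eq_re_trace_sub_card {C : Matrix ι ι 𝕜} (hC : C.PosDef)
    (h : Real.log (RCLike.re C.det) = RCLike.re C.trace - Fintype.card ι) : C = 1 := by
  refine hC.1.eq_one_of_eigenvalues_eq_one fun i ↦ ?_
  have hterm (i : ι) : 0 ≤ hC.1.eigenvalues i - 1 - Real.log (hC.1.eigenvalues i) := by
    linarith [Real.log_le_sub_one_of_pos (hC.eigenvalues_pos i)]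
  have hsum := hC.re_trace_sub_card_sub_log_re_det
  rw [h, sub_self, eq_comm, Finset.sum_eq_zero_iff_of_nonneg fun i _ ↦ hterm i] at hsum
  by_contra hne
  linarith [hsum i (Finset.mem_univ i), Real.log_lt_sub_one_of_pos (hC.eigenvalues_pos i) hne]

theorem PosDef.log_re_det_mul {A B : Matrix ι ι 𝕜} (hA : A.PosDef) (hB : B.PosDef) :
    Real.log (RCLike.re (A * B).det) =
      Real.log (RCLike.re A.det) + Real.log (RCLike.re B.det) := by
  obtain ⟨hA_re, -⟩ := RCLike.pos_iff.mp hA.det_pos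
  obtain ⟨hB_re, hB_im⟩ := RCLike.pos_iff.mp hB.det_pos
  rw [det_mul, RCLike.mul_re, hB_im, mul_zero, sub_zero, Real.log_mul hA_re.ne' hB_re.ne']

theorem PosDef.exists_posDef_log_re_det_eq_and_trace_eq {A B : Matrix ι ι 𝕜}
    (hA : A.PosDef) (hB : B.PosDef) :
    ∃ C : Matrix ι ι 𝕜, C.PosDef ∧
      Real.log (RCLike.re A.det) = Real.log (RCLike.re C.det) + Real.log (RCLike.re B.det) ∧
      C.trace = (A * B⁻¹).trace ∧ (C = 1 → A = B) := by
  have hBdet : IsUnit B.det := (isUnit_iff_isUnit_det B).mp hB.isUnit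
  -- `C = B^{-1/2} * A * B^{-1/2}`
  open scoped MatrixOrder in
  obtain ⟨T, hT, hTT⟩ : ∃ T : Matrix ι ι 𝕜, T.PosDef ∧ T * T = B⁻¹ :=
    ⟨CFC.sqrt B⁻¹, isStrictlyPositive_iff_posDef.mp
      (isStrictlyPositive_iff_posDef.mpr hB.inv).sqrt,
      CFC.sqrt_mul_sqrt_self _ hB.inv.posSemidef.nonneg⟩
  have hC : (T * A * T).PosDef := by
    simpa only [hT.1.eq] using
      hA.conjTranspose_mul_mul_same (mulVec_injective_iff_isUnit.mpr hT.isUnit)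
  have hdet : (T * A * T * B).det = A.det := by
    have : (T * T * B).det = 1 := by rw [hTT, nonsing_inv_mul _ hBdet, det_one]
    simp only [det_mul] at this ⊢
    linear_combination A.det * this
  refine ⟨T * A * T, hC, hdet ▸ hC.log_re_det_mul hB, ?_, fun hC1 ↦ ?_⟩
  · rw [trace_mul_cycle, ← hTT, trace_mul_comm]
  · have hAB : A * B⁻¹ = 1 := by
      refine hT.isUnit.mul_left_cancel ?_
      rw [← hTT, mul_one, ← mul_assoc, ← mul_assoc]
      simpa only [one_mul] using congrArg (· * T) hC1
    rw [← nonsing_inv_nonsing_inv B hBdet, inv_eq_left_inv hAB]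

theorem PosDef.log_re_det_add_card_sub_re_trace_mul_inv_le {A B : Matrix ι ι 𝕜}
    (hA : A.PosDef) (hB : B.PosDef) :
    Real.log (RCLike.re A.det) + Fintype.card ι - RCLike.re (A * B⁻¹).trace ≤
      Real.log (RCLike.re B.det) := by
  obtain ⟨C, hC, hlog, htrace, -⟩ := hA.exists_posDef_log_re_det_eq_and_trace_eq hB
  rw [← htrace]
  linarith [hC.log_re_det_le_re_trace_sub_card]

theorem PosDef.log_re_det_add_card_sub_re_trace_mul_inv_eq_iff {A B : Matrix ι ι 𝕜}
    (hA : A.PosDef) (hB : B.PosDef) :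
    Real.log (RCLike.re A.det) + Fintype.card ι - RCLike.re (A * B⁻¹).trace =
      Real.log (RCLike.re B.det) ↔ A = B := by
  refine ⟨fun h ↦ ?_, ?_⟩
  · obtain ⟨C, hC, hlog, htrace, hC1⟩ := hA.exists_posDef_log_re_det_eq_and_trace_eq hB
    rw [← htrace] at h
    exact hC1 (hC.eq_one_of_log_re_det_eq_re_trace_sub_card (by linarith))
  · rintro rfl
    rw [mul_nonsing_inv _ ((isUnit_iff_isUnit_det A).mp hA.isUnit), trace_one, RCLike.natCast_re,
      add_sub_cancel_right]

theorem mul_mul_inv_one_add {R : Type*} [CommRing R] {A Γ : Matrix ι ι R}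
    (h : IsUnit (1 + Γ).det) : A * Γ * (1 + Γ)⁻¹ = A - A * (1 + Γ)⁻¹ := by
  rw [mul_assoc, eq_sub_iff_add_eq, ← mul_add, ← add_one_mul, add_comm Γ, mul_nonsing_inv _ h,
    mul_one]

end Matrix

/-- Matrix version of the Lagrangian dual transform (Proposition 1): for Hermitian
positive semidefinite `U` and `Γ`,
`log det (I + U) - Re (tr U) + Re (tr ((I + U) * Γ * (I + Γ)⁻¹)) ≤ log det (I + Γ)`,
with equality iff `U = Γ`.  The determinants `det (I + U)` and `det (I + Γ)` are
positive reals, so we take the real logarithm of their real parts. -/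
theorem stmt_5 (n : ℕ) (U Γ : Matrix (Fin n) (Fin n) ℂ)
    (hU : U.PosSemidef) (hΓ : Γ.PosSemidef) :
    (Real.log ((1 + U).det.re) - (U.trace).re
        + (((1 + U) * Γ * (1 + Γ)⁻¹).trace).re ≤ Real.log ((1 + Γ).det.re)) ∧
    (Real.log ((1 + U).det.re) - (U.trace).re
        + (((1 + U) * Γ * (1 + Γ)⁻¹).trace).re = Real.log ((1 + Γ).det.re) ↔ U = Γ) := by
  have hA : (1 + U).PosDef := PosDef.one.add_posSemidef hU
  have hB : (1 + Γ).PosDef := PosDef.one.add_posSemidef hΓ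
  have hLHS : Real.log ((1 + U).det.re) - (U.trace).re + (((1 + U) * Γ * (1 + Γ)⁻¹).trace).re =
      Real.log ((1 + U).det.re) + n - ((1 + U) * (1 + Γ)⁻¹).trace.re := by
    rw [mul_mul_inv_one_add ((isUnit_iff_isUnit_det _).mp hB.isUnit), trace_sub, trace_add,
      trace_one, Fintype.card_fin, Complex.sub_re, Complex.add_re, Complex.natCast_re]
    ring
  have hle := hA.log_re_det_add_card_sub_re_trace_mul_inv_le hB
  have heq := hA.log_re_det_add_card_sub_re_trace_mul_inv_eq_iff hB
  rw [Fintype.card_fin] at hle heq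
  exact hLHS ▸ ⟨hle, heq.trans (add_right_inj 1)⟩
end

section
/- Let V be an n×n Hermitian positive definite complex matrix, and let S and L be n×m complex matrices. Then 2·Re(tr(Lᴴ S)) − Re(tr(Lᴴ V L)) ≤ Re(tr(Sᴴ V⁻¹ S)), with equality if and only if L = V⁻¹ S. -/
/-! Completing the square: with `D = L - V⁻¹ S`, the gap between the two sides of the inequality
is `Re tr (Dᴴ V D)`, which is nonnegative and vanishes only for `D = 0` since `V` is positive
definite. -/

open Matrix ComplexOrder

namespace Matrix

variable {m n R 𝕜 : Type*} [Fintype n]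

lemma PosDef.conjTranspose_mul_mul_same_eq_zero_iff [Fintype m] [CommRing R] [PartialOrder R]
    [StarRing R] {V : Matrix n n R} (hV : V.PosDef) {D : Matrix n m R} :
    Dᴴ * V * D = 0 ↔ D = 0 := by
  refine ⟨fun h => mulVec_injective <| funext fun x => ?_, by rintro rfl; simp⟩
  rw [zero_mulVec]
  by_contra hx
  have hpos := hV.dotProduct_mulVec_pos hx
  rw [star_mulVec, dotProduct_mulVec, vecMul_vecMul, ← dotProduct_mulVec, mulVec_mulVec, h] at hpos
  simp at hpos

lemma PosDef.re_trace_conjTranspose_mul_mul_same_nonneg [Fintype m] [RCLike 𝕜] {V : Matrix n n 𝕜}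
    (hV : V.PosDef) (D : Matrix n m 𝕜) :
    0 ≤ RCLike.re (Dᴴ * V * D).trace :=
  (RCLike.nonneg_iff.mp (hV.posSemidef.conjTranspose_mul_mul_same D).trace_nonneg).1

lemma PosDef.re_trace_conjTranspose_mul_mul_same_eq_zero_iff [Fintype m] [RCLike 𝕜]
    {V : Matrix n n 𝕜} (hV : V.PosDef) {D : Matrix n m 𝕜} :
    RCLike.re (Dᴴ * V * D).trace = 0 ↔ D = 0 := by
  have hpsd := hV.posSemidef.conjTranspose_mul_mul_same D
  have him := (RCLike.nonneg_iff.mp hpsd.trace_nonneg).2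
  rw [← hV.conjTranspose_mul_mul_same_eq_zero_iff, ← hpsd.trace_eq_zero_iff,
    RCLike.ext_iff (K := 𝕜)]
  simp [him]

lemma conjTranspose_sub_inv_mul_mul_sub_inv_mul [DecidableEq n] [CommRing R] [StarRing R]
    {V : Matrix n n R} (hV : V.IsHermitian) (hdet : IsUnit V.det) (S L : Matrix n m R) :
    (L - V⁻¹ * S)ᴴ * V * (L - V⁻¹ * S) =
      Lᴴ * V * L - Lᴴ * S - Sᴴ * L + Sᴴ * V⁻¹ * S := by
  rw [conjTranspose_sub, conjTranspose_mul, hV.inv.eq]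
  simp only [Matrix.sub_mul, Matrix.mul_sub, Matrix.mul_assoc,
    mul_nonsing_inv_cancel_left _ _ hdet, nonsing_inv_mul_cancel_left _ _ hdet]
  abel

lemma re_trace_conjTranspose_mul_comm [Fintype m] [RCLike 𝕜] (A B : Matrix n m 𝕜) :
    RCLike.re (Aᴴ * B).trace = RCLike.re (Bᴴ * A).trace := by
  rw [← conjTranspose_conjTranspose (Aᴴ * B), trace_conjTranspose, conjTranspose_mul,
    conjTranspose_conjTranspose, RCLike.star_def, RCLike.conj_re]

lemma re_trace_conjTranspose_mul_inv_mul_sub [Fintype m] [DecidableEq n] [RCLike 𝕜]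
    {V : Matrix n n 𝕜} (hV : V.IsHermitian) (hdet : IsUnit V.det) (S L : Matrix n m 𝕜) :
    RCLike.re (Sᴴ * V⁻¹ * S).trace - (2 * RCLike.re (Lᴴ * S).trace - RCLike.re (Lᴴ * V * L).trace)
      = RCLike.re ((L - V⁻¹ * S)ᴴ * V * (L - V⁻¹ * S)).trace := by
  rw [conjTranspose_sub_inv_mul_mul_sub_inv_mul hV hdet, trace_add, trace_sub, trace_sub]
  simp only [map_add, map_sub, re_trace_conjTranspose_mul_comm S L]
  ring

end Matrix

/-- Matrix version of the fractional programming (quadratic) transform (Proposition 2):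
for Hermitian positive definite `V` and matrices `S`, `L`,
`2 Re (tr (Lᴴ S)) - Re (tr (Lᴴ V L)) ≤ Re (tr (Sᴴ V⁻¹ S))`, with equality iff
`L = V⁻¹ S`. -/
theorem stmt_6 (n m : ℕ) (V : Matrix (Fin n) (Fin n) ℂ) (hV : V.PosDef)
    (S L : Matrix (Fin n) (Fin m) ℂ) :
    (2 * ((Lᴴ * S).trace).re - ((Lᴴ * V * L).trace).re ≤ ((Sᴴ * V⁻¹ * S).trace).re) ∧
    (2 * ((Lᴴ * S).trace).re - ((Lᴴ * V * L).trace).re = ((Sᴴ * V⁻¹ * S).trace).re ↔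
      L = V⁻¹ * S) := by
  have hgap := re_trace_conjTranspose_mul_inv_mul_sub hV.isHermitian hV.det_pos.ne'.isUnit S L
  refine ⟨sub_nonneg.mp (hgap ▸ hV.re_trace_conjTranspose_mul_mul_same_nonneg _), ?_⟩
  rw [eq_comm, ← sub_eq_zero, ← sub_eq_zero (a := L)]
  exact hgap ▸ hV.re_trace_conjTranspose_mul_mul_same_eq_zero_iff
end
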